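/- Let (G,N) be a pair of finite groups and K a normal subgroup of G contained in N. Then (the index of [K,_cG] in K ∩ [N,_cG]) · |M^{(c)}(G,N)| = |M^{(c)}(G/K, N/K)| · |M^{(c)}(G,K)|. -/

import Mathlib

open Subgroup

/-- `itComm X Y c` is the `c`-fold iterated commutator subgroup
`[X,_c Y] = ⁅…⁅⁅X,Y⁆,Y⁆,…,Y⁆` (with `c` copies of `Y`); `itComm X Y 0 = X`. -/
def itComm {P : Type*} [Group P] (X Y : Subgroup P) : ℕ → Subgroup P
  | 0 => X
  | c + 1 => ⁅itComm X Y c, Y⁆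

instance itComm_normal {P : Type*} [Group P] (X Y : Subgroup P) [hX : X.Normal] [hY : Y.Normal]
    (c : ℕ) : (itComm X Y c).Normal := by
  induction c with
  | zero => exact hX
  | succ c ih => exact Subgroup.commutator_normal _ _

/-- The abelianization of a group, written additively. -/
abbrev AbOf (A : Type) [Group A] : Type := Additive (Abelianization A)

/-- Iterated tensor product `M ⊗ B ⊗ ⋯ ⊗ B` (with `c` factors `B`) of `ℤ`-modules. -/
noncomputable def iterTensor (M B : ModuleCat ℤ) : ℕ → ModuleCat ℤ
  | 0 => M
  | c + 1 => ModuleCat.of ℤ (TensorProduct ℤ (iterTensor M B c) B)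

/-- `⊗^{c+1}(A, B) = A^{ab} ⊗_ℤ B^{ab} ⊗_ℤ ⋯ ⊗_ℤ B^{ab}` with `c` factors `B^{ab}`. -/
noncomputable def tensorPair (A B : Type) [Group A] [Group B] (c : ℕ) : ModuleCat ℤ :=
  iterTensor (ModuleCat.of ℤ (AbOf A)) (ModuleCat.of ℤ (AbOf B)) c

/-- `M^{(c)}(G,N) = (R ∩ [S,_c F]) / [R,_c F]`, where `R = ker π` and `S = π⁻¹(N)`,
relative to the free presentation `π : F ↠ G`. -/
def McPair {F G : Type} [Group F] [Group G] (π : F →* G) (N : Subgroup G) (c : ℕ) : Type :=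
  (π.ker ⊓ itComm (N.comap π) ⊤ c : Subgroup F) ⧸
    (itComm π.ker ⊤ c).subgroupOf (π.ker ⊓ itComm (N.comap π) ⊤ c)

noncomputable instance {F G : Type} [Group F] [Group G] (π : F →* G) (N : Subgroup G) (c : ℕ) :
    Group (McPair π N c) :=
  inferInstanceAs (Group ((π.ker ⊓ itComm (N.comap π) ⊤ c : Subgroup F) ⧸
    (itComm π.ker ⊤ c).subgroupOf (π.ker ⊓ itComm (N.comap π) ⊤ c)))

/-- `M^{(c)}(G/K, N/K) = (T ∩ [S,_c F]) / [T,_c F]`, where `T = π⁻¹(K)` and `S = π⁻¹(N)`,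
relative to the free presentation `π : F ↠ G`. -/
def McPairQuot {F G : Type} [Group F] [Group G] (π : F →* G) (N K : Subgroup G) (c : ℕ) :
    Type :=
  (K.comap π ⊓ itComm (N.comap π) ⊤ c : Subgroup F) ⧸
    (itComm (K.comap π) ⊤ c).subgroupOf (K.comap π ⊓ itComm (N.comap π) ⊤ c)

noncomputable instance {F G : Type} [Group F] [Group G] (π : F →* G) (N K : Subgroup G)
    [K.Normal] (c : ℕ) : Group (McPairQuot π N K c) :=
  inferInstanceAs (Group ((K.comap π ⊓ itComm (N.comap π) ⊤ c : Subgroup F) ⧸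
    (itComm (K.comap π) ⊤ c).subgroupOf (K.comap π ⊓ itComm (N.comap π) ⊤ c)))

/-- `M^{(c)}(G,K) = (R ∩ [T,_c F]) / [R,_c F]`, where `R = ker π` and `T = π⁻¹(K)`,
relative to the free presentation `π : F ↠ G`. -/
def McPairSub {F G : Type} [Group F] [Group G] (π : F →* G) (K : Subgroup G) (c : ℕ) : Type :=
  (π.ker ⊓ itComm (K.comap π) ⊤ c : Subgroup F) ⧸
    (itComm π.ker ⊤ c).subgroupOf (π.ker ⊓ itComm (K.comap π) ⊤ c)


/-!
All four quantities are indices between the subgroups `R ⊓ [T,_c F] ≤ R ⊓ [S,_c F]` and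
`[T,_c F] ≤ T ⊓ [S,_c F]` of `F`, so the identity is multiplicativity of the relative index.
Since `[T,_c F]` is normal, Dedekind's law splits `[T ⊓ [S,_c F] : [T,_c F]]` through
`[T,_c F] ⊔ R`; the lower factor is `[R ⊓ [S,_c F] : R ⊓ [T,_c F]]`, and the upper one is computed
in `G = F ⧸ R`, where `[T,_c F]` maps onto `[K,_c G]` and `T ⊓ [S,_c F]` onto `K ⊓ [N,_c G]`.
-/

section itComm

variable {P : Type*} [Group P]

lemma itComm_mono {X Y : Subgroup P} (h : X ≤ Y) (Z : Subgroup P) :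
    ∀ c, itComm X Z c ≤ itComm Y Z c
  | 0 => h
  | c + 1 => commutator_mono (itComm_mono h Z c) le_rfl

lemma itComm_top_le (X : Subgroup P) [X.Normal] : ∀ c, itComm X ⊤ c ≤ X
  | 0 => le_rfl
  | c + 1 => (commutator_le_left _ _).trans (itComm_top_le X c)

lemma map_itComm_top {Q : Type*} [Group Q] {f : P →* Q} (hf : Function.Surjective f)
    (X : Subgroup P) : ∀ c, (itComm X ⊤ c).map f = itComm (X.map f) ⊤ c
  | 0 => rfl
  | c + 1 => by
    rw [itComm, itComm, map_commutator, map_itComm_top hf X c, map_top_of_surjective f hf]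

end itComm

namespace Subgroup

variable {G : Type*} [Group G]

lemma sup_inf_assoc_of_le_of_normal {H A : Subgroup G} [H.Normal] (L : Subgroup G)
    (hHA : H ≤ A) : (H ⊔ L) ⊓ A = H ⊔ L ⊓ A := by
  apply SetLike.coe_injective
  rw [coe_inf, normal_mul, normal_mul, mul_inf_assoc H L A hHA]

lemma relIndex_eq_relIndex_inf_mul_relIndex_sup {H A : Subgroup G} [H.Normal] (L : Subgroup G)
    (hHA : H ≤ A) : H.relIndex A = (H ⊓ L).relIndex (L ⊓ A) * (H ⊔ L).relIndex A := by
  have hbot : H ⊓ (L ⊓ A) = H ⊓ L ⊓ (L ⊓ A) := by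
    rw [inf_assoc, inf_left_idem]
  rw [← relIndex_mul_relIndex H (H ⊔ L ⊓ A) A le_sup_left (sup_le hHA inf_le_right),
    relIndex_sup_left, ← inf_relIndex_right H, hbot, inf_relIndex_right,
    ← sup_inf_assoc_of_le_of_normal L hHA, inf_relIndex_right]

variable {Q : Type*} [Group Q]

lemma map_comap_inf (f : G →* Q) (K : Subgroup Q) (X : Subgroup G) :
    (K.comap f ⊓ X).map f = K ⊓ X.map f := by
  refine le_antisymm (le_inf ((map_mono inf_le_left).trans (map_comap_le f K))
    (map_mono inf_le_right)) ?_
  rintro _ ⟨hK, x, hx, rfl⟩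
  exact ⟨x, ⟨hK, hx⟩, rfl⟩

lemma relIndex_sup_ker (f : G →* Q) (X Y : Subgroup G) (K : Subgroup Q) :
    (X ⊔ f.ker).relIndex (K.comap f ⊓ Y) = (X.map f).relIndex (K ⊓ Y.map f) := by
  rw [← comap_map_eq, relIndex_comap, map_comap_inf]

end Subgroup

section multiplier

variable {F G : Type} [Group F] [Group G] (π : F →* G) (N K : Subgroup G) (c : ℕ)

lemma card_mcPair_eq_relIndex :
    Nat.card (McPair π N c) = (itComm π.ker ⊤ c).relIndex (π.ker ⊓ itComm (N.comap π) ⊤ c) :=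
  rfl

lemma card_mcPairQuot_eq_relIndex :
    Nat.card (McPairQuot π N K c) =
      (itComm (K.comap π) ⊤ c).relIndex (K.comap π ⊓ itComm (N.comap π) ⊤ c) :=
  rfl

lemma card_mcPairSub_eq_relIndex :
    Nat.card (McPairSub π K c) = (itComm π.ker ⊤ c).relIndex (π.ker ⊓ itComm (K.comap π) ⊤ c) :=
  rfl

end multiplier

theorem card_multiplier_eq_of_normal_general {G : Type} [Group G]
    {F : Type} [Group F] (π : F →* G) (hπ : Function.Surjective π)
    (N K : Subgroup G) [K.Normal] (hKN : K ≤ N) (c : ℕ) :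
    (itComm K ⊤ c).relIndex (K ⊓ itComm N ⊤ c) * Nat.card (McPair π N c) =
      Nat.card (McPairQuot π N K c) * Nat.card (McPairSub π K c) := by
  set R := π.ker
  set T := K.comap π
  set Sc := itComm (N.comap π) ⊤ c
  have hRT : R ≤ T := π.ker_le_comap K
  have hTcSc : itComm T ⊤ c ≤ Sc := itComm_mono (comap_mono hKN) ⊤ c
  have hquot : Nat.card (McPairQuot π N K c) =
      (R ⊓ itComm T ⊤ c).relIndex (R ⊓ Sc) * (itComm K ⊤ c).relIndex (K ⊓ itComm N ⊤ c) := by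
    rw [card_mcPairQuot_eq_relIndex, relIndex_eq_relIndex_inf_mul_relIndex_sup R
      (le_inf (itComm_top_le T c) hTcSc), inf_comm, ← inf_assoc, inf_eq_left.mpr hRT,
      relIndex_sup_ker, map_itComm_top hπ, map_itComm_top hπ, map_comap_eq_self_of_surjective hπ,
      map_comap_eq_self_of_surjective hπ]
  have hpair : Nat.card (McPair π N c) =
      (itComm R ⊤ c).relIndex (R ⊓ itComm T ⊤ c) * (R ⊓ itComm T ⊤ c).relIndex (R ⊓ Sc) := by
    rw [card_mcPair_eq_relIndex, relIndex_mul_relIndex _ _ _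
      (le_inf (itComm_top_le R c) (itComm_mono hRT ⊤ c)) (inf_le_inf_left R hTcSc)]
  rw [hquot, hpair, card_mcPairSub_eq_relIndex]
  ring

/-- Let `(G,N)` be a pair of finite groups, `K` a normal subgroup of `G` contained in `N`, and
`π : F ↠ G` a free presentation.  Then
`[K ∩ [N,_c G] : [K,_c G]] · |M^{(c)}(G,N)| = |M^{(c)}(G/K, N/K)| · |M^{(c)}(G,K)|`. -/
theorem card_multiplier_eq_of_normal {G : Type} [Group G] [Finite G]
    {F : Type} [Group F] [IsFreeGroup F] (π : F →* G) (hπ : Function.Surjective π)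
    (N K : Subgroup G) [N.Normal] [K.Normal] (hKN : K ≤ N) (c : ℕ) (hc : 1 ≤ c) :
    (itComm K ⊤ c).relIndex (K ⊓ itComm N ⊤ c) * Nat.card (McPair π N c) =
      Nat.card (McPairQuot π N K c) * Nat.card (McPairSub π K c) :=
  card_multiplier_eq_of_normal_general π hπ N K hKN c
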